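/- arXiv:2304.03175 — 2 statements merged into one kernel-verified Lean document; each statement's English description precedes it below -/
import Mathlib

section
/- (No Usage, Corollary 5.4 of LDC) In LDC(N≥): let ∅ ⊢ f :^1 (^0 A → A), and let ∅ ⊢ a₁ :^0 A and ∅ ⊢ a₂ :^0 A. Then the terms f a₁^0 and f a₂^0 have the same operational behavior under the heap semantics: either for every n there is an n-step reduction [∅] f a₁^0 ⟹^1_n [H₁] c₁ if and only if there is one for f a₂^0 (so both diverge together), or there exists n, a value v, and heaps H₁*, H₂* such that [∅] f a₁^0 ⟹^1_n [H₁*] v and [∅] f a₂^0 ⟹^1_n [H₂*] v, i.e. both reduce (in the same number of steps) to the same value term v. -/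
/-!
The simply-typed calculus LDC(N≥): graded by the preordered semiring of natural
numbers with the descending order, i.e. the preorder `q <: q'` holds iff `q' ≤ q`.
-/

namespace LDC

/-- Types of LDC(N≥): `Unit`, graded functions `^r A → B`, graded products
`^r A₁ × A₂` and sums `A₁ + A₂`. -/
inductive Ty : Type where
  | unit : Ty
  | arr : ℕ → Ty → Ty → Ty
  | prod : ℕ → Ty → Ty → Ty
  | sum : Ty → Ty → Ty

/-- Terms of LDC(N≥), with variables named by natural numbers. -/
inductive Tm : Type where
  /-- variable `x` -/
  | var : ℕ → Tm
  /-- `λ^r x:A. b` -/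
  | lam : ℕ → ℕ → Ty → Tm → Tm
  /-- application `b a^r` -/
  | app : Tm → Tm → ℕ → Tm
  /-- `unit` -/
  | unit : Tm
  /-- `let_{q₀} unit be a in b` -/
  | letUnit : ℕ → Tm → Tm → Tm
  /-- `(a₁^r, a₂)` -/
  | pair : Tm → ℕ → Tm → Tm
  /-- `let_{q₀} (x^r, y) be a in b` -/
  | letPair : ℕ → ℕ → ℕ → ℕ → Tm → Tm → Tm
  /-- `inj₁ a` -/
  | inj1 : Tm → Tm
  /-- `inj₂ a` -/
  | inj2 : Tm → Tm
  /-- `case_{q₀} a of x₁.b₁; x₂.b₂` -/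
  | case : ℕ → Tm → ℕ → Tm → ℕ → Tm → Tm

/-- Free variables of a term. -/
def fv : Tm → Finset ℕ
  | .var x => {x}
  | .lam _ x _ b => fv b \ {x}
  | .app b a _ => fv b ∪ fv a
  | .unit => ∅
  | .letUnit _ a b => fv a ∪ fv b
  | .pair a _ b => fv a ∪ fv b
  | .letPair _ x _ y a b => fv a ∪ (fv b \ {x, y})
  | .inj1 a => fv a
  | .inj2 a => fv a
  | .case _ a x₁ b₁ x₂ b₂ => fv a ∪ (fv b₁ \ {x₁}) ∪ (fv b₂ \ {x₂})

/-- Capture-avoiding substitution `a{c/z}` of `c` for the free occurrences of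
`z` in `a` (binders shadowing `z` are left untouched). -/
def subst (z : ℕ) (c : Tm) : Tm → Tm
  | .var x => if x = z then c else .var x
  | .lam r x A b => .lam r x A (if x = z then b else subst z c b)
  | .app b a r => .app (subst z c b) (subst z c a) r
  | .unit => .unit
  | .letUnit q a b => .letUnit q (subst z c a) (subst z c b)
  | .pair a r b => .pair (subst z c a) r (subst z c b)
  | .letPair q x r y a b =>
      .letPair q x r y (subst z c a) (if x = z ∨ y = z then b else subst z c b)
  | .inj1 a => .inj1 (subst z c a)
  | .inj2 a => .inj2 (subst z c a)
  | .case q a x₁ b₁ x₂ b₂ =>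
      .case q (subst z c a) x₁ (if x₁ = z then b₁ else subst z c b₁)
        x₂ (if x₂ = z then b₂ else subst z c b₂)

/-- A context is a list of graded assumptions `x :^q A`. -/
abbrev Ctx := List (ℕ × ℕ × Ty)

/-- `⌊Γ⌋`: the underlying ungraded context. -/
def floor (Γ : Ctx) : List (ℕ × Ty) := Γ.map (fun e => (e.1, e.2.2))

/-- `Γ₁ + Γ₂`: pointwise addition of grades (meaningful when `⌊Γ₁⌋ = ⌊Γ₂⌋`). -/
def ctxAdd (Γ₁ Γ₂ : Ctx) : Ctx :=
  List.zipWith (fun e₁ e₂ => (e₁.1, e₁.2.1 + e₂.2.1, e₁.2.2)) Γ₁ Γ₂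

/-- `q·Γ`: multiply every grade of `Γ` by `q`. -/
def ctxSMul (q : ℕ) (Γ : Ctx) : Ctx := Γ.map (fun e => (e.1, q * e.2.1, e.2.2))

/-- The preorder `q <: q'` of N≥, i.e. `q' ≤ q` (descending order). -/
def gradeLe (q q' : ℕ) : Prop := q' ≤ q

/-- `Γ <: Γ'`: same underlying assumptions, grades pointwise related by `<:`. -/
def ctxLe (Γ Γ' : Ctx) : Prop :=
  List.Forall₂ (fun e e' => e.1 = e'.1 ∧ e.2.2 = e'.2.2 ∧ gradeLe e.2.1 e'.2.1) Γ Γ'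

/-- The typing judgment `Γ ⊢ a :^q A` of LDC(N≥). -/
inductive Typing : Ctx → Tm → ℕ → Ty → Prop where
  | var (Γ₁ Γ₂ : Ctx) (x q : ℕ) (A : Ty) :
      Typing (ctxSMul 0 Γ₁ ++ [(x, q, A)] ++ ctxSMul 0 Γ₂) (.var x) q A
  | lam {Γ : Ctx} {b : Tm} {q : ℕ} {B : Ty} (r x : ℕ) (A : Ty) :
      Typing (Γ ++ [(x, q * r, A)]) b q B →
      Typing Γ (.lam r x A b) q (.arr r A B)
  | app {Γ₁ Γ₂ : Ctx} {b a : Tm} {q r : ℕ} {A B : Ty} :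
      Typing Γ₁ b q (.arr r A B) →
      Typing Γ₂ a (q * r) A →
      floor Γ₁ = floor Γ₂ →
      Typing (ctxAdd Γ₁ Γ₂) (.app b a r) q B
  | unit (Γ : Ctx) (q : ℕ) : Typing (ctxSMul 0 Γ) .unit q .unit
  | letUnit {Γ₁ Γ₂ : Ctx} {a b : Tm} {q q₀ : ℕ} {B : Ty} :
      Typing Γ₁ a (q * q₀) .unit →
      Typing Γ₂ b q B →
      gradeLe q₀ 1 →
      floor Γ₁ = floor Γ₂ →
      Typing (ctxAdd Γ₁ Γ₂) (.letUnit q₀ a b) q B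
  | pair {Γ₁ Γ₂ : Ctx} {a₁ a₂ : Tm} {q r : ℕ} {A₁ A₂ : Ty} :
      Typing Γ₁ a₁ (q * r) A₁ →
      Typing Γ₂ a₂ q A₂ →
      floor Γ₁ = floor Γ₂ →
      Typing (ctxAdd Γ₁ Γ₂) (.pair a₁ r a₂) q (.prod r A₁ A₂)
  | letPair {Γ₁ Γ₂ : Ctx} {a b : Tm} {q q₀ r x y : ℕ} {A₁ A₂ B : Ty} :
      Typing Γ₁ a (q * q₀) (.prod r A₁ A₂) →
      Typing (Γ₂ ++ [(x, q * q₀ * r, A₁), (y, q * q₀, A₂)]) b q B →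
      gradeLe q₀ 1 →
      floor Γ₁ = floor Γ₂ →
      Typing (ctxAdd Γ₁ Γ₂) (.letPair q₀ x r y a b) q B
  | inj1 {Γ : Ctx} {a₁ : Tm} {q : ℕ} {A₁ : Ty} (A₂ : Ty) :
      Typing Γ a₁ q A₁ → Typing Γ (.inj1 a₁) q (.sum A₁ A₂)
  | inj2 {Γ : Ctx} {a₂ : Tm} {q : ℕ} {A₂ : Ty} (A₁ : Ty) :
      Typing Γ a₂ q A₂ → Typing Γ (.inj2 a₂) q (.sum A₁ A₂)
  | case {Γ₁ Γ₂ : Ctx} {a b₁ b₂ : Tm} {q q₀ x₁ x₂ : ℕ} {A₁ A₂ B : Ty} :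
      Typing Γ₁ a (q * q₀) (.sum A₁ A₂) →
      Typing (Γ₂ ++ [(x₁, q * q₀, A₁)]) b₁ q B →
      Typing (Γ₂ ++ [(x₂, q * q₀, A₂)]) b₂ q B →
      gradeLe q₀ 1 →
      floor Γ₁ = floor Γ₂ →
      Typing (ctxAdd Γ₁ Γ₂) (.case q₀ a x₁ b₁ x₂ b₂) q B
  | subL {Γ Γ' : Ctx} {a : Tm} {q : ℕ} {A : Ty} :
      Typing Γ' a q A → ctxLe Γ Γ' → Typing Γ a q A
  | subR {Γ : Ctx} {a : Tm} {q q' : ℕ} {A : Ty} :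
      Typing Γ a q A → gradeLe q q' → Typing Γ a q' A

/-- Values: λ-abstractions, `unit`, pairs and injections. -/
def IsValue : Tm → Prop
  | .lam _ _ _ _ => True
  | .unit => True
  | .pair _ _ _ => True
  | .inj1 _ => True
  | .inj2 _ => True
  | _ => False

/-- Call-by-name small-step reduction `⊢ a ⇝ a'`. -/
inductive Step : Tm → Tm → Prop where
  | appBeta (r x : ℕ) (A : Ty) (b a : Tm) :
      Step (.app (.lam r x A b) a r) (subst x a b)
  | letUnitBeta (q₀ : ℕ) (b : Tm) :
      Step (.letUnit q₀ .unit b) b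
  | letPairBeta (q₀ x r y : ℕ) (a₁ a₂ b : Tm) :
      Step (.letPair q₀ x r y (.pair a₁ r a₂) b) (subst y a₂ (subst x a₁ b))
  | caseBeta1 (q₀ : ℕ) (a₁ : Tm) (x₁ : ℕ) (b₁ : Tm) (x₂ : ℕ) (b₂ : Tm) :
      Step (.case q₀ (.inj1 a₁) x₁ b₁ x₂ b₂) (subst x₁ a₁ b₁)
  | caseBeta2 (q₀ : ℕ) (a₂ : Tm) (x₁ : ℕ) (b₁ : Tm) (x₂ : ℕ) (b₂ : Tm) :
      Step (.case q₀ (.inj2 a₂) x₁ b₁ x₂ b₂) (subst x₂ a₂ b₂)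
  | appCong {b b' : Tm} (a : Tm) (r : ℕ) :
      Step b b' → Step (.app b a r) (.app b' a r)
  | letUnitCong {a a' : Tm} (q₀ : ℕ) (b : Tm) :
      Step a a' → Step (.letUnit q₀ a b) (.letUnit q₀ a' b)
  | letPairCong {a a' : Tm} (q₀ x r y : ℕ) (b : Tm) :
      Step a a' → Step (.letPair q₀ x r y a b) (.letPair q₀ x r y a' b)
  | caseCong {a a' : Tm} (q₀ x₁ : ℕ) (b₁ : Tm) (x₂ : ℕ) (b₂ : Tm) :
      Step a a' → Step (.case q₀ a x₁ b₁ x₂ b₂) (.case q₀ a' x₁ b₁ x₂ b₂)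

/-- A heap is a list of weighted bindings `x ↦^q a`. -/
abbrev Heap := List (ℕ × ℕ × Tm)

/-- The set of variables bound in a heap. -/
def heapDom (H : Heap) : Finset ℕ := (H.map Prod.fst).toFinset

/-- The heap reduction judgment `[H] a ⟹^q_S [H'] a'` of LDC(N≥). -/
inductive HeapStep : Heap → Tm → ℕ → Finset ℕ → Heap → Tm → Prop where
  | var {H₁ H₂ : Heap} {x r q : ℕ} {a : Tm} {S : Finset ℕ} :
      q ≠ 0 →
      HeapStep (H₁ ++ [(x, r + q, a)] ++ H₂) (.var x) q S (H₁ ++ [(x, r, a)] ++ H₂) a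
  | discard {H H' : Heap} {a a' : Tm} {q q' : ℕ} {S : Finset ℕ} :
      HeapStep H a q S H' a' → gradeLe q q' → HeapStep H a q' S H' a'
  | appCong {H H' : Heap} {b b' : Tm} {q : ℕ} {S : Finset ℕ} (a : Tm) (r : ℕ) :
      HeapStep H b q (S ∪ fv a) H' b' →
      HeapStep H (.app b a r) q S H' (.app b' a r)
  | letUnitCong {H H' : Heap} {a a' : Tm} {q : ℕ} {S : Finset ℕ} (q₀ : ℕ) (b : Tm) :
      HeapStep H a q (S ∪ fv b) H' a' →
      HeapStep H (.letUnit q₀ a b) q S H' (.letUnit q₀ a' b)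
  | letPairCong {H H' : Heap} {a a' : Tm} {q : ℕ} {S : Finset ℕ} (q₀ x r y : ℕ) (b : Tm) :
      HeapStep H a q (S ∪ fv b) H' a' →
      HeapStep H (.letPair q₀ x r y a b) q S H' (.letPair q₀ x r y a' b)
  | caseCong {H H' : Heap} {a a' : Tm} {q : ℕ} {S : Finset ℕ} (q₀ x₁ : ℕ) (b₁ : Tm) (x₂ : ℕ) (b₂ : Tm) :
      HeapStep H a q (S ∪ fv b₁ ∪ fv b₂) H' a' →
      HeapStep H (.case q₀ a x₁ b₁ x₂ b₂) q S H' (.case q₀ a' x₁ b₁ x₂ b₂)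
  | appBeta {H : Heap} {S : Finset ℕ} (r x : ℕ) (A : Ty) (b a : Tm) (q : ℕ) {x' : ℕ} :
      x' ∉ S → x' ∉ heapDom H →
      HeapStep H (.app (.lam r x A b) a r) q S
        (H ++ [(x', q * r, a)]) (subst x (.var x') b)
  | letUnitBeta {H : Heap} {S : Finset ℕ} (q₀ : ℕ) (b : Tm) (q : ℕ) :
      HeapStep H (.letUnit q₀ .unit b) q S H b
  | letPairBeta {H : Heap} {S : Finset ℕ} (q₀ x r y : ℕ) (a₁ a₂ b : Tm) (q : ℕ) {x' y' : ℕ} :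
      x' ∉ S → x' ∉ heapDom H → y' ∉ S → y' ∉ heapDom H → x' ≠ y' →
      HeapStep H (.letPair q₀ x r y (.pair a₁ r a₂) b) q S
        (H ++ [(x', q * q₀ * r, a₁), (y', q * q₀, a₂)])
        (subst y (.var y') (subst x (.var x') b))
  | caseBeta1 {H : Heap} {S : Finset ℕ} (q₀ : ℕ) (a₁ : Tm) (x₁ : ℕ) (b₁ : Tm) (x₂ : ℕ) (b₂ : Tm) (q : ℕ) {x' : ℕ} :
      x' ∉ S → x' ∉ heapDom H →
      HeapStep H (.case q₀ (.inj1 a₁) x₁ b₁ x₂ b₂) q S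
        (H ++ [(x', q * q₀, a₁)]) (subst x₁ (.var x') b₁)
  | caseBeta2 {H : Heap} {S : Finset ℕ} (q₀ : ℕ) (a₂ : Tm) (x₁ : ℕ) (b₁ : Tm) (x₂ : ℕ) (b₂ : Tm) (q : ℕ) {x' : ℕ} :
      x' ∉ S → x' ∉ heapDom H →
      HeapStep H (.case q₀ (.inj2 a₂) x₁ b₁ x₂ b₂) q S
        (H ++ [(x', q * q₀, a₂)]) (subst x₂ (.var x') b₂)

/-- The compatibility judgment `H ⊨ Γ` between heaps and contexts. -/
inductive Compat : Heap → Ctx → Prop where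
  | nil : Compat [] []
  | cons {H : Heap} {Γ Γ₀ : Ctx} {x q : ℕ} {a : Tm} {A : Ty} :
      floor Γ₀ = floor Γ →
      Typing Γ₀ a q A →
      Compat H (ctxAdd Γ Γ₀) →
      Compat (H ++ [(x, q, a)]) (Γ ++ [(x, q, A)])

/-- `n` successive heap reduction steps at grade `q`, where at each step the
support set is the domain of the current heap together with the free
variables of the current term. -/
inductive HeapSteps : Heap → Tm → ℕ → ℕ → Heap → Tm → Prop where
  | refl (H : Heap) (a : Tm) (q : ℕ) : HeapSteps H a q 0 H a
  | step {H H' H'' : Heap} {a a' a'' : Tm} {q n : ℕ} :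
      HeapStep H a q (heapDom H ∪ fv a) H' a' →
      HeapSteps H' a' q n H'' a'' →
      HeapSteps H a q (n + 1) H'' a''

end LDC

/-!
A binding stored at weight `0` can never be dereferenced: `HeapStep.var` consumes a positive
amount of the binding's weight, and a reduction at a nonzero grade only takes steps at nonzero
grades. Hence `f a₁^0` and `f a₂^0` reduce in lock-step: while `f` is evaluated the argument is
only carried along, and the β-step stores it at weight `1 · 0 = 0`, after which the terms coincide
and the heaps differ only in the body of that binding. As `a₁` and `a₂` are closed, the support
sets of the two reductions agree, so the same fresh names can be chosen.
-/

namespace LDC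

def ctxDom (Γ : Ctx) : Finset ℕ := ((floor Γ).map Prod.fst).toFinset

@[simp] lemma floor_append (Γ Δ : Ctx) : floor (Γ ++ Δ) = floor Γ ++ floor Δ :=
  List.map_append ..

lemma floor_ctxAdd : ∀ {Γ₁ Γ₂ : Ctx}, floor Γ₁ = floor Γ₂ → floor (ctxAdd Γ₁ Γ₂) = floor Γ₁
  | [], _, _ => rfl
  | _ :: _, [], h => by simp [floor] at h
  | e₁ :: Γ₁, e₂ :: Γ₂, h => by
      simp only [floor, List.map_cons, List.cons.injEq] at h
      simp only [ctxAdd, floor, List.zipWith_cons_cons, List.map_cons] at *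
      exact congrArg _ (floor_ctxAdd h.2)

lemma ctxLe.floor_eq {Γ Γ' : Ctx} (h : ctxLe Γ Γ') : floor Γ = floor Γ' := by
  induction h with
  | nil => rfl
  | cons he _ ih => simp_all [floor]

lemma ctxDom_congr {Γ Γ' : Ctx} (h : floor Γ = floor Γ') : ctxDom Γ = ctxDom Γ' := by
  rw [ctxDom, h, ctxDom]

@[simp] lemma ctxDom_append (Γ Δ : Ctx) : ctxDom (Γ ++ Δ) = ctxDom Γ ∪ ctxDom Δ := by
  simp [ctxDom]

@[simp] lemma ctxDom_nil : ctxDom [] = ∅ := rfl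

@[simp] lemma ctxDom_cons (x q : ℕ) (A : Ty) (Γ : Ctx) :
    ctxDom ((x, q, A) :: Γ) = insert x (ctxDom Γ) := by
  simp [ctxDom, floor]

lemma ctxDom_ctxAdd {Γ₁ Γ₂ : Ctx} (h : floor Γ₁ = floor Γ₂) :
    ctxDom (ctxAdd Γ₁ Γ₂) = ctxDom Γ₁ :=
  ctxDom_congr (floor_ctxAdd h)

lemma fv_subset_ctxDom {Γ : Ctx} {a : Tm} {q : ℕ} {A : Ty} (h : Typing Γ a q A) :
    fv a ⊆ ctxDom Γ := by
  induction h with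
  | var => simp [fv]
  | lam r x A _ ih => exact sdiff_le_iff'.2 (by simpa using ih)
  | unit => simp [fv]
  | inj1 _ _ ih | inj2 _ _ ih | subR _ _ ih => exact ih
  | subL _ hle ih => rwa [ctxDom_congr hle.floor_eq]
  | app _ _ hfl ih₁ ih₂ | letUnit _ _ _ hfl ih₁ ih₂ | pair _ _ hfl ih₁ ih₂ =>
      rw [ctxDom_ctxAdd hfl, ctxDom_congr hfl, fv]
      rw [ctxDom_congr hfl] at ih₁
      exact Finset.union_subset ih₁ ih₂
  | letPair _ _ _ hfl ih₁ ih₂ =>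
      rw [ctxDom_ctxAdd hfl, ctxDom_congr hfl, fv]
      rw [ctxDom_congr hfl] at ih₁
      exact Finset.union_subset ih₁ (sdiff_le_iff'.2 (by simpa using ih₂))
  | case _ _ _ _ hfl ih₁ ih₂ ih₃ =>
      rw [ctxDom_ctxAdd hfl, ctxDom_congr hfl, fv]
      rw [ctxDom_congr hfl] at ih₁
      exact Finset.union_subset (Finset.union_subset ih₁ (sdiff_le_iff'.2 (by simpa using ih₂)))
        (sdiff_le_iff'.2 (by simpa using ih₃))

lemma fv_eq_empty_of_typing_nil {a : Tm} {q : ℕ} {A : Ty} (h : Typing [] a q A) : fv a = ∅ :=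
  Finset.subset_empty.1 (fv_subset_ctxDom h)

theorem _root_.List.Forall₂.exists_of_append_singleton_append_left {α β : Type*}
    {R : α → β → Prop} {e : α} {l₂ : List α} : ∀ {l₁ : List α} {m : List β},
      List.Forall₂ R (l₁ ++ [e] ++ l₂) m →
      ∃ m₁ e' m₂, m = m₁ ++ [e'] ++ m₂ ∧ List.Forall₂ R l₁ m₁ ∧ R e e' ∧ List.Forall₂ R l₂ m₂
  | [], _, .cons he h => ⟨[], _, _, rfl, .nil, he, h⟩
  | _ :: _, _, .cons he h =>
      let ⟨m₁, e', m₂, hm, h₁, h', h₂⟩ := exists_of_append_singleton_append_left h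
      ⟨_ :: m₁, e', m₂, hm ▸ rfl, .cons he h₁, h', h₂⟩

def HeapEqv (H H' : Heap) : Prop :=
  List.Forall₂ (fun e e' => e.1 = e'.1 ∧ e.2.1 = e'.2.1 ∧ (e.2.1 ≠ 0 → e.2.2 = e'.2.2)) H H'

lemma HeapEqv.refl (H : Heap) : HeapEqv H H :=
  List.forall₂_same.2 fun _ _ => ⟨rfl, rfl, fun _ => rfl⟩

lemma HeapEqv.append {H₁ H₂ H₁' H₂' : Heap} (h₁ : HeapEqv H₁ H₁') (h₂ : HeapEqv H₂ H₂') :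
    HeapEqv (H₁ ++ H₂) (H₁' ++ H₂') :=
  List.rel_append h₁ h₂

lemma HeapEqv.heapDom_eq {H H' : Heap} (h : HeapEqv H H') : heapDom H = heapDom H' := by
  induction h with
  | nil => rfl
  | cons he _ ih => simp_all [heapDom]

lemma gradeLe.ne_zero {q q' : ℕ} (h : gradeLe q q') (hq' : q' ≠ 0) : q ≠ 0 := by
  unfold gradeLe at h
  omega

lemma HeapStep.exists_of_heapEqv {H H₂ H' : Heap} {c c₂ : Tm} {q : ℕ} {S : Finset ℕ}
    (h : HeapStep H c q S H₂ c₂) (hq : q ≠ 0) (hH : HeapEqv H H') :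
    ∃ H₂', HeapStep H' c q S H₂' c₂ ∧ HeapEqv H₂ H₂' := by
  induction h generalizing H' with
  | var hq =>
      obtain ⟨H₁', ⟨_, _, b⟩, H₂', rfl, h₁, ⟨rfl, rfl, hb⟩, h₂⟩ :=
        List.Forall₂.exists_of_append_singleton_append_left hH
      obtain rfl := hb (by dsimp only; omega)
      exact ⟨_, .var hq, HeapEqv.append (HeapEqv.append h₁ (.refl _)) h₂⟩
  | discard _ hle ih =>
      exact (ih (hle.ne_zero hq) hH).imp fun _ ⟨hs, hr⟩ => ⟨hs.discard hle, hr⟩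
  | appCong _ _ _ ih => exact (ih hq hH).imp fun _ ⟨hs, hr⟩ => ⟨.appCong _ _ hs, hr⟩
  | letUnitCong _ _ _ ih => exact (ih hq hH).imp fun _ ⟨hs, hr⟩ => ⟨.letUnitCong _ _ hs, hr⟩
  | letPairCong _ _ _ _ _ _ ih =>
      exact (ih hq hH).imp fun _ ⟨hs, hr⟩ => ⟨.letPairCong _ _ _ _ _ hs, hr⟩
  | caseCong _ _ _ _ _ _ ih =>
      exact (ih hq hH).imp fun _ ⟨hs, hr⟩ => ⟨.caseCong _ _ _ _ _ hs, hr⟩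
  | appBeta _ _ _ _ _ _ hS hdom =>
      exact ⟨_, .appBeta _ _ _ _ _ _ hS (hH.heapDom_eq ▸ hdom), hH.append (.refl _)⟩
  | letUnitBeta => exact ⟨_, .letUnitBeta _ _ _, hH⟩
  | letPairBeta _ _ _ _ _ _ _ _ hS₁ hdom₁ hS₂ hdom₂ hne =>
      exact ⟨_, .letPairBeta _ _ _ _ _ _ _ _ hS₁ (hH.heapDom_eq ▸ hdom₁) hS₂
        (hH.heapDom_eq ▸ hdom₂) hne, hH.append (.refl _)⟩
  | caseBeta1 _ _ _ _ _ _ _ hS hdom =>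
      exact ⟨_, .caseBeta1 _ _ _ _ _ _ _ hS (hH.heapDom_eq ▸ hdom), hH.append (.refl _)⟩
  | caseBeta2 _ _ _ _ _ _ _ hS hdom =>
      exact ⟨_, .caseBeta2 _ _ _ _ _ _ _ hS (hH.heapDom_eq ▸ hdom), hH.append (.refl _)⟩

inductive ZeroArgSwap (a₁ a₂ : Tm) : Tm → Tm → Prop
  | refl (c : Tm) : ZeroArgSwap a₁ a₂ c c
  | app (g : Tm) : ZeroArgSwap a₁ a₂ (.app g a₁ 0) (.app g a₂ 0)

lemma ZeroArgSwap.fv_eq {a₁ a₂ c c' : Tm} (hfv : fv a₁ = fv a₂) (h : ZeroArgSwap a₁ a₂ c c') :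
    fv c = fv c' := by
  cases h with
  | refl => rfl
  | app g => rw [fv, fv, hfv]

lemma HeapStep.exists_of_app_zero {a₁ a₂ g c₂ : Tm} {H H₂ H' : Heap} {q : ℕ} {S : Finset ℕ}
    (hfv : fv a₁ = fv a₂) (h : HeapStep H (.app g a₁ 0) q S H₂ c₂) (hq : q ≠ 0)
    (hH : HeapEqv H H') :
    ∃ H₂' c₂', HeapStep H' (.app g a₂ 0) q S H₂' c₂' ∧ HeapEqv H₂ H₂' ∧
      ZeroArgSwap a₁ a₂ c₂ c₂' := by
  generalize hc : Tm.app g a₁ 0 = c at h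
  induction h generalizing g H' with
  | discard _ hle ih =>
      exact (ih (hle.ne_zero hq) hH hc).imp fun _ ⟨_, hs, hr⟩ => ⟨_, hs.discard hle, hr⟩
  | appCong _ _ hstep =>
      cases hc
      obtain ⟨H₂', hs, hr⟩ := hstep.exists_of_heapEqv hq hH
      exact ⟨H₂', _, .appCong _ _ (hfv ▸ hs), hr, .app _⟩
  | appBeta _ _ _ _ _ _ hS hdom =>
      cases hc
      exact ⟨_, _, .appBeta _ _ _ _ _ _ hS (hH.heapDom_eq ▸ hdom),
        hH.append (.cons ⟨rfl, rfl, fun h0 => (h0 (mul_zero q)).elim⟩ .nil), .refl _⟩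
  | _ => cases hc

lemma HeapStep.exists_of_zeroArgSwap {a₁ a₂ c c' c₂ : Tm} {H H₂ H' : Heap} {q : ℕ}
    {S : Finset ℕ} (hfv : fv a₁ = fv a₂) (h : HeapStep H c q S H₂ c₂) (hq : q ≠ 0)
    (hH : HeapEqv H H') (hc : ZeroArgSwap a₁ a₂ c c') :
    ∃ H₂' c₂', HeapStep H' c' q S H₂' c₂' ∧ HeapEqv H₂ H₂' ∧ ZeroArgSwap a₁ a₂ c₂ c₂' := by
  cases hc with
  | refl => exact (h.exists_of_heapEqv hq hH).imp fun _ ⟨hs, hr⟩ => ⟨_, hs, hr, .refl _⟩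
  | app => exact h.exists_of_app_zero hfv hq hH

lemma HeapSteps.exists_of_zeroArgSwap {a₁ a₂ c c' c₂ : Tm} {H H₂ H' : Heap} {q n : ℕ}
    (hfv : fv a₁ = fv a₂) (h : HeapSteps H c q n H₂ c₂) (hq : q ≠ 0) (hH : HeapEqv H H')
    (hc : ZeroArgSwap a₁ a₂ c c') :
    ∃ H₂' c₂', HeapSteps H' c' q n H₂' c₂' := by
  induction h generalizing H' c' with
  | refl => exact ⟨_, _, .refl _ _ _⟩
  | step hstep _ ih =>
      rw [hH.heapDom_eq, hc.fv_eq hfv] at hstep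
      obtain ⟨H₂', c₂', hs, hH₂, hc₂⟩ := hstep.exists_of_zeroArgSwap hfv hq hH hc
      obtain ⟨H₃, c₃, hrest⟩ := ih hq hH₂ hc₂
      exact ⟨H₃, c₃, .step hs hrest⟩

end LDC

theorem LDC.no_usage_general {f a₁ a₂ : LDC.Tm} {A : LDC.Ty}
    (h₁ : LDC.Typing [] a₁ 0 A)
    (h₂ : LDC.Typing [] a₂ 0 A) :
    (∀ n : ℕ,
      (∃ (H₁ : LDC.Heap) (c₁ : LDC.Tm),
        LDC.HeapSteps [] (.app f a₁ 0) 1 n H₁ c₁) ↔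
      (∃ (H₂ : LDC.Heap) (c₂ : LDC.Tm),
        LDC.HeapSteps [] (.app f a₂ 0) 1 n H₂ c₂)) ∨
    (∃ (n : ℕ) (v : LDC.Tm) (H₁ H₂ : LDC.Heap),
      LDC.IsValue v ∧
      LDC.HeapSteps [] (.app f a₁ 0) 1 n H₁ v ∧
      LDC.HeapSteps [] (.app f a₂ 0) 1 n H₂ v) := by
  have hfv : LDC.fv a₁ = LDC.fv a₂ := by
    rw [LDC.fv_eq_empty_of_typing_nil h₁, LDC.fv_eq_empty_of_typing_nil h₂]
  refine Or.inl fun n => ⟨?_, ?_⟩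
  · rintro ⟨_, _, hs⟩
    exact hs.exists_of_zeroArgSwap hfv one_ne_zero (.refl []) (.app f)
  · rintro ⟨_, _, hs⟩
    exact hs.exists_of_zeroArgSwap hfv.symm one_ne_zero (.refl []) (.app f)

/-- **No Usage (Corollary 5.4 of LDC).** In LDC(N≥): let `∅ ⊢ f :^1 (^0 A → A)`,
and let `∅ ⊢ a₁ :^0 A` and `∅ ⊢ a₂ :^0 A`. Then the terms `f a₁^0` and
`f a₂^0` have the same operational behavior under the heap semantics: either
for every `n` there is an `n`-step reduction of the one iff there is one of
the other (so both diverge together), or both reduce, in the same number of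
steps, to the same value term `v`. -/
theorem LDC.no_usage {f a₁ a₂ : LDC.Tm} {A : LDC.Ty}
    (hf : LDC.Typing [] f 1 (.arr 0 A A))
    (h₁ : LDC.Typing [] a₁ 0 A)
    (h₂ : LDC.Typing [] a₂ 0 A) :
    (∀ n : ℕ,
      (∃ (H₁ : LDC.Heap) (c₁ : LDC.Tm),
        LDC.HeapSteps [] (.app f a₁ 0) 1 n H₁ c₁) ↔
      (∃ (H₂ : LDC.Heap) (c₂ : LDC.Tm),
        LDC.HeapSteps [] (.app f a₂ 0) 1 n H₂ c₂)) ∨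
    (∃ (n : ℕ) (v : LDC.Tm) (H₁ H₂ : LDC.Heap),
      LDC.IsValue v ∧
      LDC.HeapSteps [] (.app f a₁ 0) 1 n H₁ v ∧
      LDC.HeapSteps [] (.app f a₂ 0) 1 n H₂ v) :=
  LDC.no_usage_general h₁ h₂
end

section
/- (Noninterference, Corollary 5.5 of LDC) In LDC(𝟚), where 𝟚 is the two-element lattice with elements L ⊑ H (L = ⊥ and H = ⊤): let ∅ ⊢ f :^L (^H A → A), and let ∅ ⊢ a₁ :^H A and ∅ ⊢ a₂ :^H A. Then the terms f a₁^H and f a₂^H have the same operational behavior under the heap semantics: either for every n there is an n-step reduction [∅] f a₁^H ⟹^L_n [H₁] c₁ if and only if there is one for f a₂^H (so both diverge together), or there exists n, a value v, and heaps H₁*, H₂* such that [∅] f a₁^H ⟹^L_n [H₁*] v and [∅] f a₂^H ⟹^L_n [H₂*] v, i.e. both reduce (in the same number of steps) to the same value term v. -/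
/-!
The simply-typed calculus LDC(𝓛): graded by an arbitrary lattice
`𝓛 = (L, ⊓, ⊔, ⊤, ⊥, ⊑)` with greatest element `⊤` and least element `⊥`.
-/

namespace LDCL

/-- Types of LDC(𝓛): `Unit`, labelled functions `^m A → B`, labelled products
`^m A₁ × A₂` and sums `A₁ + A₂`, with labels drawn from `L`. -/
inductive Ty (L : Type) : Type where
  | unit : Ty L
  | arr : L → Ty L → Ty L → Ty L
  | prod : L → Ty L → Ty L → Ty L
  | sum : Ty L → Ty L → Ty L

/-- Terms of LDC(𝓛), with variables named by natural numbers. -/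
inductive Tm (L : Type) : Type where
  /-- variable `x` -/
  | var : ℕ → Tm L
  /-- `λ^m x:A. b` -/
  | lam : L → ℕ → Ty L → Tm L → Tm L
  /-- application `b a^m` -/
  | app : Tm L → Tm L → L → Tm L
  /-- `unit` -/
  | unit : Tm L
  /-- `let unit be a in b` -/
  | letUnit : Tm L → Tm L → Tm L
  /-- `(a₁^m, a₂)` -/
  | pair : Tm L → L → Tm L → Tm L
  /-- `let (x^m, y) be a in b` -/
  | letPair : ℕ → L → ℕ → Tm L → Tm L → Tm L
  /-- `inj₁ a` -/
  | inj1 : Tm L → Tm L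
  /-- `inj₂ a` -/
  | inj2 : Tm L → Tm L
  /-- `case a of x₁.b₁; x₂.b₂` -/
  | case : Tm L → ℕ → Tm L → ℕ → Tm L → Tm L

variable {L : Type}

/-- Free variables of a term. -/
def fv : Tm L → Finset ℕ
  | .var x => {x}
  | .lam _ x _ b => fv b \ {x}
  | .app b a _ => fv b ∪ fv a
  | .unit => ∅
  | .letUnit a b => fv a ∪ fv b
  | .pair a _ b => fv a ∪ fv b
  | .letPair x _ y a b => fv a ∪ (fv b \ {x, y})
  | .inj1 a => fv a
  | .inj2 a => fv a
  | .case a x₁ b₁ x₂ b₂ => fv a ∪ (fv b₁ \ {x₁}) ∪ (fv b₂ \ {x₂})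

/-- Capture-avoiding substitution `a{c/z}` of `c` for the free occurrences of
`z` in `a` (binders shadowing `z` are left untouched). -/
def subst (z : ℕ) (c : Tm L) : Tm L → Tm L
  | .var x => if x = z then c else .var x
  | .lam m x A b => .lam m x A (if x = z then b else subst z c b)
  | .app b a m => .app (subst z c b) (subst z c a) m
  | .unit => .unit
  | .letUnit a b => .letUnit (subst z c a) (subst z c b)
  | .pair a m b => .pair (subst z c a) m (subst z c b)
  | .letPair x m y a b =>
      .letPair x m y (subst z c a) (if x = z ∨ y = z then b else subst z c b)
  | .inj1 a => .inj1 (subst z c a)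
  | .inj2 a => .inj2 (subst z c a)
  | .case a x₁ b₁ x₂ b₂ =>
      .case (subst z c a) x₁ (if x₁ = z then b₁ else subst z c b₁)
        x₂ (if x₂ = z then b₂ else subst z c b₂)

/-- A context is a list of labelled assumptions `x :^ℓ A`. -/
abbrev Ctx (L : Type) := List (ℕ × L × Ty L)

/-- `⌊Γ⌋`: the underlying unlabelled context. -/
def floor (Γ : Ctx L) : List (ℕ × Ty L) := Γ.map (fun e => (e.1, e.2.2))

variable [Lattice L] [BoundedOrder L]

/-- `Γ₁ ⊓ Γ₂`: pointwise meet of labels (meaningful when `⌊Γ₁⌋ = ⌊Γ₂⌋`). -/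
def ctxMeet (Γ₁ Γ₂ : Ctx L) : Ctx L :=
  List.zipWith (fun e₁ e₂ => (e₁.1, e₁.2.1 ⊓ e₂.2.1, e₁.2.2)) Γ₁ Γ₂

/-- `ℓ ⊔ Γ`: join `ℓ` onto every label of `Γ`. -/
def ctxJoin (ℓ : L) (Γ : Ctx L) : Ctx L := Γ.map (fun e => (e.1, ℓ ⊔ e.2.1, e.2.2))

/-- `Γ ⊑ Γ'`: same underlying assumptions, labels pointwise related by `⊑`. -/
def ctxLe (Γ Γ' : Ctx L) : Prop :=
  List.Forall₂ (fun e e' => e.1 = e'.1 ∧ e.2.2 = e'.2.2 ∧ e.2.1 ≤ e'.2.1) Γ Γ'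

/-- The typing judgment `Γ ⊢ a :^ℓ A` of LDC(𝓛). -/
inductive Typing : Ctx L → Tm L → L → Ty L → Prop where
  | var (Γ₁ Γ₂ : Ctx L) (x : ℕ) (ℓ : L) (A : Ty L) :
      Typing (ctxJoin ⊤ Γ₁ ++ [(x, ℓ, A)] ++ ctxJoin ⊤ Γ₂) (.var x) ℓ A
  | lam {Γ : Ctx L} {b : Tm L} {ℓ : L} {B : Ty L} (m : L) (x : ℕ) (A : Ty L) :
      Typing (Γ ++ [(x, ℓ ⊔ m, A)]) b ℓ B →
      Typing Γ (.lam m x A b) ℓ (.arr m A B)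
  | app {Γ₁ Γ₂ : Ctx L} {b a : Tm L} {ℓ m : L} {A B : Ty L} :
      Typing Γ₁ b ℓ (.arr m A B) →
      Typing Γ₂ a (ℓ ⊔ m) A →
      floor Γ₁ = floor Γ₂ →
      Typing (ctxMeet Γ₁ Γ₂) (.app b a m) ℓ B
  | unit (Γ : Ctx L) (ℓ : L) : Typing (ctxJoin ⊤ Γ) .unit ℓ .unit
  | letUnit {Γ₁ Γ₂ : Ctx L} {a b : Tm L} {ℓ : L} {B : Ty L} :
      Typing Γ₁ a ℓ .unit →
      Typing Γ₂ b ℓ B →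
      floor Γ₁ = floor Γ₂ →
      Typing (ctxMeet Γ₁ Γ₂) (.letUnit a b) ℓ B
  | pair {Γ₁ Γ₂ : Ctx L} {a₁ a₂ : Tm L} {ℓ m : L} {A₁ A₂ : Ty L} :
      Typing Γ₁ a₁ (ℓ ⊔ m) A₁ →
      Typing Γ₂ a₂ ℓ A₂ →
      floor Γ₁ = floor Γ₂ →
      Typing (ctxMeet Γ₁ Γ₂) (.pair a₁ m a₂) ℓ (.prod m A₁ A₂)
  | letPair {Γ₁ Γ₂ : Ctx L} {a b : Tm L} {ℓ m : L} {x y : ℕ} {A₁ A₂ B : Ty L} :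
      Typing Γ₁ a ℓ (.prod m A₁ A₂) →
      Typing (Γ₂ ++ [(x, ℓ ⊔ m, A₁), (y, ℓ, A₂)]) b ℓ B →
      floor Γ₁ = floor Γ₂ →
      Typing (ctxMeet Γ₁ Γ₂) (.letPair x m y a b) ℓ B
  | inj1 {Γ : Ctx L} {a₁ : Tm L} {ℓ : L} {A₁ : Ty L} (A₂ : Ty L) :
      Typing Γ a₁ ℓ A₁ → Typing Γ (.inj1 a₁) ℓ (.sum A₁ A₂)
  | inj2 {Γ : Ctx L} {a₂ : Tm L} {ℓ : L} {A₂ : Ty L} (A₁ : Ty L) :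
      Typing Γ a₂ ℓ A₂ → Typing Γ (.inj2 a₂) ℓ (.sum A₁ A₂)
  | case {Γ₁ Γ₂ : Ctx L} {a b₁ b₂ : Tm L} {ℓ : L} {x₁ x₂ : ℕ} {A₁ A₂ B : Ty L} :
      Typing Γ₁ a ℓ (.sum A₁ A₂) →
      Typing (Γ₂ ++ [(x₁, ℓ, A₁)]) b₁ ℓ B →
      Typing (Γ₂ ++ [(x₂, ℓ, A₂)]) b₂ ℓ B →
      floor Γ₁ = floor Γ₂ →
      Typing (ctxMeet Γ₁ Γ₂) (.case a x₁ b₁ x₂ b₂) ℓ B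
  | subL {Γ Γ' : Ctx L} {a : Tm L} {ℓ : L} {A : Ty L} :
      Typing Γ' a ℓ A → ctxLe Γ Γ' → Typing Γ a ℓ A
  | subR {Γ : Ctx L} {a : Tm L} {ℓ ℓ' : L} {A : Ty L} :
      Typing Γ a ℓ A → ℓ ≤ ℓ' → Typing Γ a ℓ' A

/-- Values: λ-abstractions, `unit`, pairs and injections. -/
def IsValue : Tm L → Prop
  | .lam _ _ _ _ => True
  | .unit => True
  | .pair _ _ _ => True
  | .inj1 _ => True
  | .inj2 _ => True
  | _ => False

/-- Call-by-name small-step reduction `⊢ a ⇝ a'`. -/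
inductive Step : Tm L → Tm L → Prop where
  | appBeta (m : L) (x : ℕ) (A : Ty L) (b a : Tm L) :
      Step (.app (.lam m x A b) a m) (subst x a b)
  | letUnitBeta (b : Tm L) :
      Step (.letUnit .unit b) b
  | letPairBeta (x : ℕ) (m : L) (y : ℕ) (a₁ a₂ b : Tm L) :
      Step (.letPair x m y (.pair a₁ m a₂) b) (subst y a₂ (subst x a₁ b))
  | caseBeta1 (a₁ : Tm L) (x₁ : ℕ) (b₁ : Tm L) (x₂ : ℕ) (b₂ : Tm L) :
      Step (.case (.inj1 a₁) x₁ b₁ x₂ b₂) (subst x₁ a₁ b₁)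
  | caseBeta2 (a₂ : Tm L) (x₁ : ℕ) (b₁ : Tm L) (x₂ : ℕ) (b₂ : Tm L) :
      Step (.case (.inj2 a₂) x₁ b₁ x₂ b₂) (subst x₂ a₂ b₂)
  | appCong {b b' : Tm L} (a : Tm L) (m : L) :
      Step b b' → Step (.app b a m) (.app b' a m)
  | letUnitCong {a a' : Tm L} (b : Tm L) :
      Step a a' → Step (.letUnit a b) (.letUnit a' b)
  | letPairCong {a a' : Tm L} (x : ℕ) (m : L) (y : ℕ) (b : Tm L) :
      Step a a' → Step (.letPair x m y a b) (.letPair x m y a' b)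
  | caseCong {a a' : Tm L} (x₁ : ℕ) (b₁ : Tm L) (x₂ : ℕ) (b₂ : Tm L) :
      Step a a' → Step (.case a x₁ b₁ x₂ b₂) (.case a' x₁ b₁ x₂ b₂)

/-- A heap is a list of weighted bindings `x ↦^ℓ a`. -/
abbrev Heap (L : Type) := List (ℕ × L × Tm L)

/-- The set of variables bound in a heap. -/
def heapDom (H : Heap L) : Finset ℕ := (H.map Prod.fst).toFinset

/-- The heap reduction judgment `[H] a ⟹^ℓ_S [H'] a'` of LDC(𝓛). -/
inductive HeapStep : Heap L → Tm L → L → Finset ℕ → Heap L → Tm L → Prop where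
  | var {H₁ H₂ : Heap L} {x : ℕ} {m ℓ : L} {a : Tm L} {S : Finset ℕ} :
      ℓ ≠ ⊤ →
      HeapStep (H₁ ++ [(x, m ⊓ ℓ, a)] ++ H₂) (.var x) ℓ S (H₁ ++ [(x, m, a)] ++ H₂) a
  | discard {H H' : Heap L} {a a' : Tm L} {ℓ ℓ' : L} {S : Finset ℕ} :
      HeapStep H a ℓ S H' a' → ℓ ≤ ℓ' → HeapStep H a ℓ' S H' a'
  | appCong {H H' : Heap L} {b b' : Tm L} {ℓ : L} {S : Finset ℕ} (a : Tm L) (m : L) :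
      HeapStep H b ℓ (S ∪ fv a) H' b' →
      HeapStep H (.app b a m) ℓ S H' (.app b' a m)
  | letUnitCong {H H' : Heap L} {a a' : Tm L} {ℓ : L} {S : Finset ℕ} (b : Tm L) :
      HeapStep H a ℓ (S ∪ fv b) H' a' →
      HeapStep H (.letUnit a b) ℓ S H' (.letUnit a' b)
  | letPairCong {H H' : Heap L} {a a' : Tm L} {ℓ : L} {S : Finset ℕ}
      (x : ℕ) (m : L) (y : ℕ) (b : Tm L) :
      HeapStep H a ℓ (S ∪ fv b) H' a' →
      HeapStep H (.letPair x m y a b) ℓ S H' (.letPair x m y a' b)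
  | caseCong {H H' : Heap L} {a a' : Tm L} {ℓ : L} {S : Finset ℕ}
      (x₁ : ℕ) (b₁ : Tm L) (x₂ : ℕ) (b₂ : Tm L) :
      HeapStep H a ℓ (S ∪ fv b₁ ∪ fv b₂) H' a' →
      HeapStep H (.case a x₁ b₁ x₂ b₂) ℓ S H' (.case a' x₁ b₁ x₂ b₂)
  | appBeta {H : Heap L} {S : Finset ℕ} (m : L) (x : ℕ) (A : Ty L) (b a : Tm L)
      (ℓ : L) {x' : ℕ} :
      x' ∉ S → x' ∉ heapDom H →
      HeapStep H (.app (.lam m x A b) a m) ℓ S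
        (H ++ [(x', ℓ ⊔ m, a)]) (subst x (.var x') b)
  | letUnitBeta {H : Heap L} {S : Finset ℕ} (b : Tm L) (ℓ : L) :
      HeapStep H (.letUnit .unit b) ℓ S H b
  | letPairBeta {H : Heap L} {S : Finset ℕ} (x : ℕ) (m : L) (y : ℕ)
      (a₁ a₂ b : Tm L) (ℓ : L) {x' y' : ℕ} :
      x' ∉ S → x' ∉ heapDom H → y' ∉ S → y' ∉ heapDom H → x' ≠ y' →
      HeapStep H (.letPair x m y (.pair a₁ m a₂) b) ℓ S
        (H ++ [(x', ℓ ⊔ m, a₁), (y', ℓ, a₂)])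
        (subst y (.var y') (subst x (.var x') b))
  | caseBeta1 {H : Heap L} {S : Finset ℕ} (a₁ : Tm L) (x₁ : ℕ) (b₁ : Tm L)
      (x₂ : ℕ) (b₂ : Tm L) (ℓ : L) {x' : ℕ} :
      x' ∉ S → x' ∉ heapDom H →
      HeapStep H (.case (.inj1 a₁) x₁ b₁ x₂ b₂) ℓ S
        (H ++ [(x', ℓ, a₁)]) (subst x₁ (.var x') b₁)
  | caseBeta2 {H : Heap L} {S : Finset ℕ} (a₂ : Tm L) (x₁ : ℕ) (b₁ : Tm L)
      (x₂ : ℕ) (b₂ : Tm L) (ℓ : L) {x' : ℕ} :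
      x' ∉ S → x' ∉ heapDom H →
      HeapStep H (.case (.inj2 a₂) x₁ b₁ x₂ b₂) ℓ S
        (H ++ [(x', ℓ, a₂)]) (subst x₂ (.var x') b₂)

/-- The compatibility judgment `H ⊨ Γ` between heaps and contexts. -/
inductive Compat : Heap L → Ctx L → Prop where
  | nil : Compat [] []
  | cons {H : Heap L} {Γ Γ₀ : Ctx L} {x : ℕ} {ℓ : L} {a : Tm L} {A : Ty L} :
      floor Γ₀ = floor Γ →
      Typing Γ₀ a ℓ A →
      Compat H (ctxMeet Γ Γ₀) →
      Compat (H ++ [(x, ℓ, a)]) (Γ ++ [(x, ℓ, A)])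

/-- `n` successive heap reduction steps at label `ℓ`, where at each step the
support set is the domain of the current heap together with the free
variables of the current term. -/
inductive HeapSteps : Heap L → Tm L → L → ℕ → Heap L → Tm L → Prop where
  | refl (H : Heap L) (a : Tm L) (ℓ : L) : HeapSteps H a ℓ 0 H a
  | step {H H' H'' : Heap L} {a a' a'' : Tm L} {ℓ : L} {n : ℕ} :
      HeapStep H a ℓ (heapDom H ∪ fv a) H' a' →
      HeapSteps H' a' ℓ n H'' a'' →
      HeapSteps H a ℓ (n + 1) H'' a''

end LDCL
namespace LDCL

section Aux

variable {L : Type}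

theorem subst_of_not_mem_fv (z : ℕ) (c : Tm L) :
    ∀ (t : Tm L), z ∉ fv t → subst z c t = t := by
  intro t
  induction t with
  | var x =>
      intro h; simp [fv] at h
      simp [subst, Ne.symm h]
  | lam m x A b ih =>
      intro h; simp [fv, Finset.mem_sdiff] at h
      by_cases hx : x = z
      · simp [subst, hx]
      · simp [subst, hx, ih fun hb => hx ((h hb).symm)]
  | app b a m ihb iha =>
      intro h; simp [fv] at h
      simp [subst, ihb h.1, iha h.2]
  | unit => intro _; simp [subst]
  | letUnit a b iha ihb =>
      intro h; simp [fv] at h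
      simp [subst, iha h.1, ihb h.2]
  | pair a m b iha ihb =>
      intro h; simp [fv] at h
      simp [subst, iha h.1, ihb h.2]
  | letPair x m y a b iha ihb =>
      intro h; simp [fv, Finset.mem_sdiff] at h
      obtain ⟨ha, hb⟩ := h
      by_cases hxy : x = z ∨ y = z
      · simp [subst, hxy, iha ha]
      · push_neg at hxy
        have hb' : z ∉ fv b := by
          intro hzb
          rcases hb hzb (fun h => (hxy.1 h.symm)) with h'
          exact hxy.2 h'.symm
        simp [subst, iha ha, ihb hb']

  | inj1 a ih => intro h; simp [fv] at h; simp [subst, ih h]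
  | inj2 a ih => intro h; simp [fv] at h; simp [subst, ih h]
  | case a x₁ b₁ x₂ b₂ iha ih₁ ih₂ =>
      intro h; simp [fv, Finset.mem_sdiff] at h
      obtain ⟨ha, h1, h2⟩ := h
      have e1 : x₁ = z ∨ subst z c b₁ = b₁ := by
        by_cases hx : x₁ = z
        · exact Or.inl hx
        · exact Or.inr (ih₁ fun hb => hx ((h1 hb).symm))
      have e2 : x₂ = z ∨ subst z c b₂ = b₂ := by
        by_cases hx : x₂ = z
        · exact Or.inl hx
        · exact Or.inr (ih₂ fun hb => hx ((h2 hb).symm))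
      rcases e1 with h1' | h1' <;> rcases e2 with h2' | h2' <;>
        simp [subst, h1', h2', iha ha]
end Aux

end LDCL
namespace LDCL

/-- Indistinguishability of terms: structural equality except that in
high (`⊤`-labelled) application argument positions arbitrary closed terms
are allowed. -/
inductive Rel : Tm Bool → Tm Bool → Prop where
  | var (x : ℕ) : Rel (.var x) (.var x)
  | lam (m : Bool) (x : ℕ) (A : Ty Bool) {b b' : Tm Bool} :
      Rel b b' → Rel (.lam m x A b) (.lam m x A b')
  | app {b b' a a' : Tm Bool} (m : Bool) :
      Rel b b' → Rel a a' → Rel (.app b a m) (.app b' a' m)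
  | appH {b b' a a' : Tm Bool} :
      Rel b b' → fv a = ∅ → fv a' = ∅ → Rel (.app b a true) (.app b' a' true)
  | unit : Rel .unit .unit
  | letUnit {a a' b b' : Tm Bool} :
      Rel a a' → Rel b b' → Rel (.letUnit a b) (.letUnit a' b')
  | pair {a a' b b' : Tm Bool} (m : Bool) :
      Rel a a' → Rel b b' → Rel (.pair a m b) (.pair a' m b')
  | letPair (x : ℕ) (m : Bool) (y : ℕ) {a a' b b' : Tm Bool} :
      Rel a a' → Rel b b' → Rel (.letPair x m y a b) (.letPair x m y a' b')
  | inj1 {a a' : Tm Bool} : Rel a a' → Rel (.inj1 a) (.inj1 a')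
  | inj2 {a a' : Tm Bool} : Rel a a' → Rel (.inj2 a) (.inj2 a')
  | case {a a' b₁ b₁' b₂ b₂' : Tm Bool} (x₁ x₂ : ℕ) :
      Rel a a' → Rel b₁ b₁' → Rel b₂ b₂' →
      Rel (.case a x₁ b₁ x₂ b₂) (.case a' x₁ b₁' x₂ b₂')

theorem Rel.refl : ∀ t : Tm Bool, Rel t t := by
  intro t
  induction t with
  | var x => exact .var x
  | lam m x A b ih => exact .lam m x A ih
  | app b a m ihb iha => exact .app m ihb iha
  | unit => exact .unit
  | letUnit a b iha ihb => exact .letUnit iha ihb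
  | pair a m b iha ihb => exact .pair m iha ihb
  | letPair x m y a b iha ihb => exact .letPair x m y iha ihb
  | inj1 a ih => exact .inj1 ih
  | inj2 a ih => exact .inj2 ih
  | case a x₁ b₁ x₂ b₂ iha ih₁ ih₂ => exact .case x₁ x₂ iha ih₁ ih₂

theorem Rel.symm {t t' : Tm Bool} (h : Rel t t') : Rel t' t := by
  induction h with
  | var x => exact .var x
  | lam m x A _ ih => exact .lam m x A ih
  | app m _ _ ihb iha => exact .app m ihb iha
  | appH _ ha ha' ihb => exact .appH ihb ha' ha
  | unit => exact .unit
  | letUnit _ _ iha ihb => exact .letUnit iha ihb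
  | pair m _ _ iha ihb => exact .pair m iha ihb
  | letPair x m y _ _ iha ihb => exact .letPair x m y iha ihb
  | inj1 _ ih => exact .inj1 ih
  | inj2 _ ih => exact .inj2 ih
  | case x₁ x₂ _ _ _ iha ih₁ ih₂ => exact .case x₁ x₂ iha ih₁ ih₂

theorem Rel.fv_eq {t t' : Tm Bool} (h : Rel t t') : fv t = fv t' := by
  induction h with
  | var x => rfl
  | lam m x A _ ih => simp [fv, ih]
  | app m _ _ ihb iha => simp [fv, ihb, iha]
  | appH _ ha ha' ihb => simp [fv, ihb, ha, ha']
  | unit => rfl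
  | letUnit _ _ iha ihb => simp [fv, iha, ihb]
  | pair m _ _ iha ihb => simp [fv, iha, ihb]
  | letPair x m y _ _ iha ihb => simp [fv, iha, ihb]
  | inj1 _ ih => simp [fv, ih]
  | inj2 _ ih => simp [fv, ih]
  | case x₁ x₂ _ _ _ iha ih₁ ih₂ => simp [fv, iha, ih₁, ih₂]

theorem subst_of_fv_empty (z : ℕ) (c : Tm Bool) {t : Tm Bool} (h : fv t = ∅) :
    subst z c t = t :=
  subst_of_not_mem_fv z c t (by simp [h])

theorem Rel.subst (z : ℕ) (c : Tm Bool) {t t' : Tm Bool} (h : Rel t t') :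
    Rel (subst z c t) (subst z c t') := by
  induction h with
  | var x =>
      by_cases hx : x = z <;> simp [LDCL.subst, hx]
      · exact Rel.refl c
      · exact .var x
  | lam m x A hb ih =>
      by_cases hx : x = z <;> simp [LDCL.subst, hx]
      · exact .lam m z A hb
      · exact .lam m x A ih
  | app m _ _ ihb iha => exact .app m ihb iha
  | appH _ ha ha' ihb =>
      simpa [LDCL.subst, subst_of_fv_empty z c ha, subst_of_fv_empty z c ha']
        using Rel.appH ihb ha ha'
  | unit => exact .unit
  | letUnit _ _ iha ihb => exact .letUnit iha ihb
  | pair m _ _ iha ihb => exact .pair m iha ihb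
  | letPair x m y ha hb iha ihb =>
      by_cases hxy : x = z ∨ y = z <;> simp [LDCL.subst, hxy]
      · exact .letPair x m y iha hb
      · exact .letPair x m y iha ihb
  | inj1 _ ih => exact .inj1 ih
  | inj2 _ ih => exact .inj2 ih
  | case x₁ x₂ ha h₁ h₂ iha ih₁ ih₂ =>
      by_cases hx₁ : x₁ = z <;> by_cases hx₂ : x₂ = z <;>
        simp [LDCL.subst, hx₁, hx₂]
      · exact .case z z iha h₁ h₂
      · exact .case z x₂ iha h₁ ih₂
      · exact .case x₁ z iha ih₁ h₂
      · exact .case x₁ x₂ iha ih₁ ih₂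

/-- Indistinguishability of heaps: same variables and labels, with related
contents at low (`false`) labels. -/
def RelHeap : Heap Bool → Heap Bool → Prop :=
  List.Forall₂ (fun e e' =>
    e.1 = e'.1 ∧ e.2.1 = e'.2.1 ∧ (e.2.1 = false → Rel e.2.2 e'.2.2))

theorem RelHeap.symm {H H' : Heap Bool} (h : RelHeap H H') : RelHeap H' H := by
  induction h with
  | nil => exact List.Forall₂.nil
  | cons h₁ _ ih =>
      exact List.Forall₂.cons
        ⟨h₁.1.symm, h₁.2.1.symm,
          fun hf => (h₁.2.2 (h₁.2.1.trans hf)).symm⟩ ih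

theorem RelHeap.map_fst_eq {H H' : Heap Bool} (h : RelHeap H H') :
    H.map Prod.fst = H'.map Prod.fst := by
  induction h with
  | nil => rfl
  | cons h₁ _ ih => simp [h₁.1, ih]

theorem RelHeap.heapDom_eq {H H' : Heap Bool} (h : RelHeap H H') :
    heapDom H = heapDom H' := by
  unfold heapDom; rw [h.map_fst_eq]

theorem RelHeap.append_split {H₁ H₂ : Heap Bool} {H' : Heap Bool}
    (h : RelHeap (H₁ ++ H₂) H') :
    ∃ H₁' H₂', H' = H₁' ++ H₂' ∧ RelHeap H₁ H₁' ∧ RelHeap H₂ H₂' := by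
  induction H₁ generalizing H' with
  | nil => exact ⟨[], H', rfl, List.Forall₂.nil, h⟩
  | cons e H₁ ih =>
      cases h with
      | cons h₁ h₂ =>
          obtain ⟨H₁', H₂', rfl, hr₁, hr₂⟩ := ih h₂
          exact ⟨_ :: H₁', H₂', rfl, List.Forall₂.cons h₁ hr₁, hr₂⟩

theorem RelHeap.append {Ha Hb Ha' Hb' : Heap Bool}
    (h₁ : RelHeap Ha Ha') (h₂ : RelHeap Hb Hb') :
    RelHeap (Ha ++ Hb) (Ha' ++ Hb') :=
  List.rel_append h₁ h₂

end LDCL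
namespace LDCL

theorem heap_entry_rel {x : ℕ} {k : Bool} {a a' : Tm Bool}
    (h : k = false → Rel a a') :
    RelHeap [(x, k, a)] [(x, k, a')] :=
  List.Forall₂.cons ⟨rfl, rfl, h⟩ List.Forall₂.nil

theorem HeapStep.sim {Ha Ha' : Heap Bool} {ta ta' : Tm Bool} {ℓ : Bool}
    {S : Finset ℕ} (h : HeapStep Ha ta ℓ S Ha' ta') :
    ∀ {Hb : Heap Bool} {tb : Tm Bool}, RelHeap Ha Hb → Rel ta tb →
      ∃ Hb' tb', HeapStep Hb tb ℓ S Hb' tb' ∧ RelHeap Ha' Hb' ∧ Rel ta' tb' := by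
  induction h with
  | @var H₁ H₂ x m ℓ a S hℓ =>
      intro Hb tb hH ht
      cases ht
      have hℓ' : ℓ = false := by
        cases ℓ
        · rfl
        · exact absurd rfl hℓ
      subst hℓ'
      obtain ⟨Hbl, Hb₂, rfl, hrl, hr₂⟩ := hH.append_split
      obtain ⟨Hb₁, Hbm, rfl, hr₁, hrm⟩ := hrl.append_split
      cases hrm with
      | cons he hnil =>
          cases hnil
          rename_i e'
          obtain ⟨x₂, k₂, a₂⟩ := e'
          obtain ⟨hx₂, hk₂, hrel₂⟩ := he
          simp only at hx₂ hk₂ hrel₂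
          subst hx₂
          have hml : m ⊓ false = false := by cases m <;> rfl
          have hk₂' : k₂ = false := by rw [← hk₂, hml]
          subst hk₂'
          have hra : Rel a a₂ := hrel₂ (by rw [hml])
          refine ⟨Hb₁ ++ [(x, m, a₂)] ++ Hb₂, a₂, ?_, ?_, hra⟩
          · have := HeapStep.var (H₁ := Hb₁) (H₂ := Hb₂) (x := x) (m := m)
              (ℓ := false) (a := a₂) (S := S) hℓ
            rwa [hml] at this
          · exact ((hr₁.append (heap_entry_rel (fun _ => hra))).append hr₂)
  | @discard H H' a a' ℓ ℓ' S hs hle ih =>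
      intro Hb tb hH ht
      obtain ⟨Hb', tb', hstep, hH', hrel⟩ := ih hH ht
      exact ⟨Hb', tb', hstep.discard hle, hH', hrel⟩
  | @appCong H H' b b' ℓ S a m hs ih =>
      intro Hb tb hH ht
      cases ht with
      | app m hb ha =>
          rename_i fb' a'
          obtain ⟨Hb', tb', hstep, hH', hrel⟩ := ih hH hb
          rw [ha.fv_eq] at hstep
          exact ⟨Hb', .app tb' a' m, .appCong a' m hstep, hH', .app m hrel ha⟩
      | appH hb hfa hfa' =>
          rename_i fb' a'
          obtain ⟨Hb', tb', hstep, hH', hrel⟩ := ih hH hb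
          have hstep' : HeapStep Hb fb' ℓ (S ∪ fv a') Hb' tb' := by
            rwa [hfa, ← hfa'] at hstep
          exact ⟨Hb', .app tb' a' true, .appCong a' true hstep', hH',
            .appH hrel hfa hfa'⟩
  | @letUnitCong H H' a a' ℓ S b hs ih =>
      intro Hb tb hH ht
      cases ht with
      | letUnit ha hb =>
          rename_i a₂ b₂
          obtain ⟨Hb', tb', hstep, hH', hrel⟩ := ih hH ha
          rw [hb.fv_eq] at hstep
          exact ⟨Hb', .letUnit tb' b₂, .letUnitCong b₂ hstep, hH',
            .letUnit hrel hb⟩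
  | @letPairCong H H' a a' ℓ S x m y b hs ih =>
      intro Hb tb hH ht
      cases ht with
      | letPair _ _ _ ha hb =>
          rename_i a₂ b₂
          obtain ⟨Hb', tb', hstep, hH', hrel⟩ := ih hH ha
          rw [hb.fv_eq] at hstep
          exact ⟨Hb', .letPair x m y tb' b₂, .letPairCong x m y b₂ hstep, hH',
            .letPair x m y hrel hb⟩
  | @caseCong H H' a a' ℓ S x₁ b₁ x₂ b₂ hs ih =>
      intro Hb tb hH ht
      cases ht with
      | case _ _ ha hb₁ hb₂ =>
          rename_i a₂ c₁ c₂
          obtain ⟨Hb', tb', hstep, hH', hrel⟩ := ih hH ha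
          rw [hb₁.fv_eq, hb₂.fv_eq] at hstep
          exact ⟨Hb', .case tb' x₁ c₁ x₂ c₂, .caseCong x₁ c₁ x₂ c₂ hstep, hH',
            .case x₁ x₂ hrel hb₁ hb₂⟩
  | @appBeta H S m x A b a ℓ x' hxS hxH =>
      intro Hb tb hH ht
      cases ht with
      | app m hlam ha =>
          rename_i fb' a'
          cases hlam with
          | lam _ _ _ hb =>
              rename_i b'
              refine ⟨Hb ++ [(x', ℓ ⊔ m, a')], subst x (.var x') b',
                HeapStep.appBeta m x A b' a' ℓ hxS (hH.heapDom_eq ▸ hxH),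
                hH.append (heap_entry_rel fun _ => ha), Rel.subst x (.var x') hb⟩
      | appH hlam hfa hfa' =>
          rename_i fb' a'
          cases hlam with
          | lam _ _ _ hb =>
              rename_i b'
              refine ⟨Hb ++ [(x', ℓ ⊔ true, a')], subst x (.var x') b',
                HeapStep.appBeta true x A b' a' ℓ hxS (hH.heapDom_eq ▸ hxH),
                hH.append (heap_entry_rel fun hf => ?_),
                Rel.subst x (.var x') hb⟩
              exact absurd hf (by cases ℓ <;> simp)
  | @letUnitBeta H S b ℓ =>
      intro Hb tb hH ht
      cases ht with
      | letUnit ha hb =>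
          cases ha
          exact ⟨Hb, _, .letUnitBeta _ ℓ, hH, hb⟩
  | @letPairBeta H S x m y a₁ a₂ b ℓ x' y' hxS hxH hyS hyH hxy =>
      intro Hb tb hH ht
      cases ht with
      | letPair _ _ _ hp hb =>
          rename_i p' b'
          cases hp with
          | pair _ ha₁ ha₂ =>
              rename_i a₁' a₂'
              refine ⟨Hb ++ [(x', ℓ ⊔ m, a₁'), (y', ℓ, a₂')],
                subst y (.var y') (subst x (.var x') b'),
                HeapStep.letPairBeta x m y a₁' a₂' b' ℓ hxS (hH.heapDom_eq ▸ hxH)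
                  hyS (hH.heapDom_eq ▸ hyH) hxy,
                hH.append ?_,
                Rel.subst y (.var y') (Rel.subst x (.var x') hb)⟩
              exact List.Forall₂.cons ⟨rfl, rfl, fun _ => ha₁⟩
                (List.Forall₂.cons ⟨rfl, rfl, fun _ => ha₂⟩ List.Forall₂.nil)
  | @caseBeta1 H S a₁ x₁ b₁ x₂ b₂ ℓ x' hxS hxH =>
      intro Hb tb hH ht
      cases ht with
      | case _ _ ha hb₁ hb₂ =>
          rename_i a' c₁ c₂
          cases ha with
          | inj1 ha₁ =>
              rename_i a₁'
              exact ⟨Hb ++ [(x', ℓ, a₁')], subst x₁ (.var x') c₁,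
                HeapStep.caseBeta1 a₁' x₁ c₁ x₂ c₂ ℓ hxS (hH.heapDom_eq ▸ hxH),
                hH.append (heap_entry_rel fun _ => ha₁),
                Rel.subst x₁ (.var x') hb₁⟩
  | @caseBeta2 H S a₂ x₁ b₁ x₂ b₂ ℓ x' hxS hxH =>
      intro Hb tb hH ht
      cases ht with
      | case _ _ ha hb₁ hb₂ =>
          rename_i a' c₁ c₂
          cases ha with
          | inj2 ha₂ =>
              rename_i a₂'
              exact ⟨Hb ++ [(x', ℓ, a₂')], subst x₂ (.var x') c₂,
                HeapStep.caseBeta2 a₂' x₁ c₁ x₂ c₂ ℓ hxS (hH.heapDom_eq ▸ hxH),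
                hH.append (heap_entry_rel fun _ => ha₂),
                Rel.subst x₂ (.var x') hb₂⟩

theorem HeapSteps.sim {Ha Ha' : Heap Bool} {ta ta' : Tm Bool} {ℓ : Bool}
    {n : ℕ} (h : HeapSteps Ha ta ℓ n Ha' ta') :
    ∀ {Hb : Heap Bool} {tb : Tm Bool}, RelHeap Ha Hb → Rel ta tb →
      ∃ Hb' tb', HeapSteps Hb tb ℓ n Hb' tb' ∧ RelHeap Ha' Hb' ∧ Rel ta' tb' := by
  induction h with
  | refl H a ℓ =>
      intro Hb tb hH ht
      exact ⟨Hb, tb, .refl Hb tb ℓ, hH, ht⟩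
  | @step H H' H'' a a' a'' ℓ n hs hrest ih =>
      intro Hb tb hH ht
      obtain ⟨Hb', tb', hstep, hH', hrel⟩ := hs.sim hH ht
      obtain ⟨Hb'', tb'', hsteps, hH'', hrel'⟩ := ih hH' hrel
      refine ⟨Hb'', tb'', .step ?_ hsteps, hH'', hrel'⟩
      rwa [hH.heapDom_eq, ht.fv_eq] at hstep

end LDCL
namespace LDCL

section Typ
set_option linter.unusedSectionVars false

variable {L : Type} [Lattice L] [BoundedOrder L]

/-- The variables declared in a context. -/
def ctxVars (Γ : Ctx L) : Finset ℕ := (Γ.map Prod.fst).toFinset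

theorem ctxVars_append (Γ₁ Γ₂ : Ctx L) :
    ctxVars (Γ₁ ++ Γ₂) = ctxVars Γ₁ ∪ ctxVars Γ₂ := by
  simp [ctxVars]

theorem ctxVars_ctxJoin (ℓ : L) (Γ : Ctx L) : ctxVars (ctxJoin ℓ Γ) = ctxVars Γ := by
  induction Γ with
  | nil => rfl
  | cons e Γ ih => simp [ctxVars, ctxJoin] at ih ⊢; rw [ih]

theorem floor_map_fst (Γ : Ctx L) : (floor Γ).map Prod.fst = Γ.map Prod.fst := by
  simp [floor, List.map_map, Function.comp]

theorem ctxVars_eq_of_floor_eq {Γ₁ Γ₂ : Ctx L} (h : floor Γ₁ = floor Γ₂) :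
    ctxVars Γ₁ = ctxVars Γ₂ := by
  unfold ctxVars
  rw [← floor_map_fst, ← floor_map_fst, h]

theorem length_eq_of_floor_eq {Γ₁ Γ₂ : Ctx L} (h : floor Γ₁ = floor Γ₂) :
    Γ₁.length = Γ₂.length := by
  have := congrArg List.length h
  simpa [floor] using this

theorem ctxMeet_map_fst : ∀ (Γ₁ Γ₂ : Ctx L), Γ₁.length = Γ₂.length →
    (ctxMeet Γ₁ Γ₂).map Prod.fst = Γ₁.map Prod.fst
  | [], [], _ => rfl
  | [], _ :: _, h => by simp at h
  | _ :: _, [], h => by simp at h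
  | e₁ :: Γ₁, e₂ :: Γ₂, h => by
      simp only [List.length_cons, Nat.succ.injEq] at h
      simp only [ctxMeet, List.zipWith_cons_cons, List.map_cons]
      have := ctxMeet_map_fst Γ₁ Γ₂ h
      unfold ctxMeet at this
      rw [this]

theorem ctxVars_ctxMeet {Γ₁ Γ₂ : Ctx L} (h : floor Γ₁ = floor Γ₂) :
    ctxVars (ctxMeet Γ₁ Γ₂) = ctxVars Γ₁ := by
  unfold ctxVars
  rw [ctxMeet_map_fst Γ₁ Γ₂ (length_eq_of_floor_eq h)]

theorem ctxLe_floor_eq {Γ Γ' : Ctx L} (h : ctxLe Γ Γ') : floor Γ = floor Γ' := by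
  induction h with
  | nil => rfl
  | cons h₁ _ ih => simp [floor] at ih ⊢; exact ⟨⟨h₁.1, h₁.2.1⟩, ih⟩

theorem Typing.fv_subset {Γ : Ctx L} {a : Tm L} {ℓ : L} {A : Ty L}
    (h : Typing Γ a ℓ A) : fv a ⊆ ctxVars Γ := by
  induction h with
  | var Γ₁ Γ₂ x ℓ A =>
      intro y hy
      simp [fv] at hy
      subst hy
      simp [ctxVars]
  | lam m x A _ ih =>
      intro y hy
      simp only [fv, Finset.mem_sdiff, Finset.mem_singleton] at hy
      have h' := ih hy.1
      rw [ctxVars_append] at h'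
      rcases Finset.mem_union.1 h' with h' | h'
      · exact h'
      · simp [ctxVars] at h'
        exact absurd h' hy.2
  | app hb ha hfl ihb iha =>
      rw [ctxVars_ctxMeet hfl]
      intro y hy
      simp only [fv, Finset.mem_union] at hy
      rcases hy with hy | hy
      · exact ihb hy
      · exact (ctxVars_eq_of_floor_eq hfl).symm ▸ iha hy
  | unit Γ ℓ => simp [fv]
  | letUnit ha hb hfl iha ihb =>
      rw [ctxVars_ctxMeet hfl]
      intro y hy
      simp only [fv, Finset.mem_union] at hy
      rcases hy with hy | hy
      · exact iha hy
      · exact (ctxVars_eq_of_floor_eq hfl).symm ▸ ihb hy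
  | pair ha hb hfl iha ihb =>
      rw [ctxVars_ctxMeet hfl]
      intro y hy
      simp only [fv, Finset.mem_union] at hy
      rcases hy with hy | hy
      · exact iha hy
      · exact (ctxVars_eq_of_floor_eq hfl).symm ▸ ihb hy
  | @letPair Γ₁ Γ₂ a b ℓ m x y A₁ A₂ B ha hb hfl iha ihb =>
      rw [ctxVars_ctxMeet hfl]
      intro z hz
      simp only [fv, Finset.mem_union, Finset.mem_sdiff, Finset.mem_insert,
        Finset.mem_singleton] at hz
      rcases hz with hz | ⟨hz, hz'⟩
      · exact iha hz
      · push_neg at hz'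
        have h' := ihb hz
        rw [ctxVars_append] at h'
        rcases Finset.mem_union.1 h' with h' | h'
        · exact (ctxVars_eq_of_floor_eq hfl).symm ▸ h'
        · simp [ctxVars] at h'
          rcases h' with h' | h'
          · exact absurd h' hz'.1
          · exact absurd h' hz'.2
  | inj1 A₂ _ ih => simpa [fv] using ih
  | inj2 A₁ _ ih => simpa [fv] using ih
  | @case Γ₁ Γ₂ a b₁ b₂ ℓ x₁ x₂ A₁ A₂ B ha hb₁ hb₂ hfl iha ih₁ ih₂ =>
      rw [ctxVars_ctxMeet hfl]
      intro z hz
      simp only [fv, Finset.mem_union, Finset.mem_sdiff,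
        Finset.mem_singleton] at hz
      rcases hz with (hz | ⟨hz, hz'⟩) | ⟨hz, hz'⟩
      · exact iha hz
      · have h' := ih₁ hz
        rw [ctxVars_append] at h'
        rcases Finset.mem_union.1 h' with h' | h'
        · exact (ctxVars_eq_of_floor_eq hfl).symm ▸ h'
        · simp [ctxVars] at h'
          exact absurd h' hz'
      · have h' := ih₂ hz
        rw [ctxVars_append] at h'
        rcases Finset.mem_union.1 h' with h' | h'
        · exact (ctxVars_eq_of_floor_eq hfl).symm ▸ h'
        · simp [ctxVars] at h'
          exact absurd h' hz'
  | subL _ hle ih =>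
      rwa [ctxVars_eq_of_floor_eq (ctxLe_floor_eq hle)]
  | subR _ _ ih => exact ih

theorem Typing.fv_empty {a : Tm L} {ℓ : L} {A : Ty L}
    (h : Typing [] a ℓ A) : fv a = ∅ := by
  have := h.fv_subset
  simpa [ctxVars, Finset.subset_empty] using this

end Typ

end LDCL

/-- **Noninterference (Corollary 5.5 of LDC).** In LDC(𝟚), where `𝟚` is the
two-element lattice (here `Bool`) with `L = ⊥ = false` and `H = ⊤ = true`:
let `∅ ⊢ f :^⊥ (^⊤ A → A)`, and let `∅ ⊢ a₁ :^⊤ A` and `∅ ⊢ a₂ :^⊤ A`. Then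
the terms `f a₁^⊤` and `f a₂^⊤` have the same operational behavior under the
heap semantics: either for every `n` there is an `n`-step reduction of the one
iff there is one of the other (so both diverge together), or both reduce, in
the same number of steps, to the same value term `v`. -/
theorem LDCL.noninterference {f a₁ a₂ : LDCL.Tm Bool} {A : LDCL.Ty Bool}
    (hf : LDCL.Typing [] f (⊥ : Bool) (.arr (⊤ : Bool) A A))
    (h₁ : LDCL.Typing [] a₁ (⊤ : Bool) A)
    (h₂ : LDCL.Typing [] a₂ (⊤ : Bool) A) :
    (∀ n : ℕ,
      (∃ (H₁ : LDCL.Heap Bool) (c₁ : LDCL.Tm Bool),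
        LDCL.HeapSteps [] (.app f a₁ (⊤ : Bool)) (⊥ : Bool) n H₁ c₁) ↔
      (∃ (H₂ : LDCL.Heap Bool) (c₂ : LDCL.Tm Bool),
        LDCL.HeapSteps [] (.app f a₂ (⊤ : Bool)) (⊥ : Bool) n H₂ c₂)) ∨
    (∃ (n : ℕ) (v : LDCL.Tm Bool) (H₁ H₂ : LDCL.Heap Bool),
      LDCL.IsValue v ∧
      LDCL.HeapSteps [] (.app f a₁ (⊤ : Bool)) (⊥ : Bool) n H₁ v ∧
      LDCL.HeapSteps [] (.app f a₂ (⊤ : Bool)) (⊥ : Bool) n H₂ v) := by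
  left
  intro n
  have c₁ : LDCL.fv a₁ = ∅ := h₁.fv_empty
  have c₂ : LDCL.fv a₂ = ∅ := h₂.fv_empty
  constructor
  · rintro ⟨H₁, d₁, hs⟩
    obtain ⟨H₂, d₂, hsteps, -, -⟩ :=
      hs.sim List.Forall₂.nil (LDCL.Rel.appH (LDCL.Rel.refl f) c₁ c₂)
    exact ⟨H₂, d₂, hsteps⟩
  · rintro ⟨H₂, d₂, hs⟩
    obtain ⟨H₁, d₁, hsteps, -, -⟩ :=
      hs.sim List.Forall₂.nil (LDCL.Rel.appH (LDCL.Rel.refl f) c₂ c₁)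
    exact ⟨H₁, d₁, hsteps⟩
end
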